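/- arXiv:1604.03932 — 2 statements merged into one kernel-verified Lean document; each statement's English description precedes it below -/
import Mathlib

section
/- For integers 1 ≤ q ≤ p−1 and δ, δ' > 0 with (p+1)δ = (q+1)δ' and (p+2)δ ≤ 1, one has (pδ)^{(p+1)m} ≤ (2e)^m (qδ')^{(q+1)m} for any m ∈ ℕ. -/
/-!
Put `x = pδ` and `y = qδ'`. Since `(p + 2)δ ≤ 1` we have `0 ≤ x ≤ 1`, so `x ^ (p + 1) ≤ x ^ (q + 1)`;
and `x ≤ (p + 1)δ = (q + 1)δ' = (1 + 1/q) y`. Finally `(1 + 1/q) ^ (q + 1) ≤ 2e`, because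
`(1 + 1/q) ^ q ≤ e` and `1 + 1/q ≤ 2`. Raising `x ^ (p + 1) ≤ 2e y ^ (q + 1)` to the `m`-th power
gives the claim.
-/

open Real

theorem Real.one_add_inv_pow_succ_le_two_mul_exp {n : ℕ} (hn : 1 ≤ n) :
    (1 + (n : ℝ)⁻¹) ^ (n + 1) ≤ 2 * exp 1 := by
  have hinv : (n : ℝ)⁻¹ ≤ 1 := inv_le_one_of_one_le₀ (by exact_mod_cast hn)
  rw [pow_succ, mul_comm]
  exact mul_le_mul (by linarith) one_add_inv_pow_le_exp (by positivity) zero_le_two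

theorem delta_power_comparison_general
    (p q m : ℕ) (hq1 : 1 ≤ q) (hqp : q ≤ p - 1)
    (δ δ' : ℝ) (hδ : 0 < δ) (hδ' : 0 < δ')
    (heq : ((p : ℝ) + 1) * δ = ((q : ℝ) + 1) * δ')
    (hle : ((p : ℝ) + 2) * δ ≤ 1) :
    ((p : ℝ) * δ) ^ ((p + 1) * m) ≤
      (2 * Real.exp 1) ^ m * ((q : ℝ) * δ') ^ ((q + 1) * m) := by
  have hq0 : (q : ℝ) ≠ 0 := by positivity
  have hx0 : 0 ≤ (p : ℝ) * δ := by positivity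
  have hx1 : (p : ℝ) * δ ≤ 1 := by linarith
  have hxy : (p : ℝ) * δ ≤ (1 + (q : ℝ)⁻¹) * ((q : ℝ) * δ') := by
    rw [add_mul, one_mul, inv_mul_cancel_left₀ hq0]
    linarith
  rw [pow_mul, pow_mul, ← mul_pow]
  gcongr
  calc ((p : ℝ) * δ) ^ (p + 1)
      ≤ ((p : ℝ) * δ) ^ (q + 1) := pow_le_pow_of_le_one hx0 hx1 (by omega)
    _ ≤ ((1 + (q : ℝ)⁻¹) * ((q : ℝ) * δ')) ^ (q + 1) := by gcongr
    _ = (1 + (q : ℝ)⁻¹) ^ (q + 1) * ((q : ℝ) * δ') ^ (q + 1) := mul_pow ..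
    _ ≤ 2 * exp 1 * ((q : ℝ) * δ') ^ (q + 1) := by
      gcongr
      exact one_add_inv_pow_succ_le_two_mul_exp hq1

/-- For 1 ≤ q ≤ p−1, (p+1)δ = (q+1)δ' and (p+2)δ ≤ 1:
(pδ)^{(p+1)m} ≤ (2e)^m (qδ')^{(q+1)m}. -/
theorem delta_power_comparison
    (p q m : ℕ) (hq1 : 1 ≤ q) (hqp : q ≤ p - 1) (hp : 1 ≤ p) (hm : 1 ≤ m)
    (δ δ' : ℝ) (hδ : 0 < δ) (hδ' : 0 < δ')
    (heq : ((p : ℝ) + 1) * δ = ((q : ℝ) + 1) * δ')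
    (hle : ((p : ℝ) + 2) * δ ≤ 1) :
    ((p : ℝ) * δ) ^ ((p + 1) * m) ≤
      (2 * Real.exp 1) ^ m * ((q : ℝ) * δ') ^ ((q + 1) * m) :=
  delta_power_comparison_general p q m hq1 hqp δ δ' hδ hδ' heq hle
end

section
/- If ω is a weight function satisfying (α₀) (i.e., there exist C > 0 and t₀ > 0 such that ω(λt) ≤ λ C ω(t) for all λ ≥ 1 and t ≥ t₀), then ω is equivalent to a subadditive weight function; more precisely there exists a concave increasing function κ: [0,∞) → [0,∞) and constants A, B > 0 with κ(t) ≤ A ω(t) + A and ω(t) ≤ B κ(t) + B for all t ≥ 0. -/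
/-!
Put `κ(t) = inf_{s ≥ t₀} C ω(s) (1 + t / s)`, with `C ≥ 1` the constant of (α₀). As an infimum of
affine functions with nonnegative coefficients, `κ` is concave, increasing and nonnegative on
`[0, ∞)`. Each of these affine functions dominates `ω`: below `s` by monotonicity of `ω`, and above
`s` by (α₀) with `λ = t / s`. Conversely, the choice `s = max t t₀` bounds `κ(t)` by `2C ω(t)` for
`t ≥ t₀` and by `2C ω(t₀)` for `t < t₀`.
-/

open Set Filter

section InfAffine

variable {ι : Type*} (a b : ι → ℝ)

theorem bddBelow_range_affine (ha : ∀ i, 0 ≤ a i) (hb : ∀ i, 0 ≤ b i) {t : ℝ} (ht : 0 ≤ t) :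
    BddBelow (range fun i => a i + b i * t) :=
  ⟨0, by rintro _ ⟨i, rfl⟩; have := mul_nonneg (hb i) ht; linarith [ha i]⟩

theorem monotoneOn_iInf_affine (ha : ∀ i, 0 ≤ a i) (hb : ∀ i, 0 ≤ b i) :
    MonotoneOn (fun t => ⨅ i, a i + b i * t) (Ici 0) := fun _ hx _ _ hxy =>
  ciInf_mono (bddBelow_range_affine a b ha hb hx) fun i => by
    have := mul_le_mul_of_nonneg_left hxy (hb i); linarith

theorem concaveOn_iInf_affine [Nonempty ι] (ha : ∀ i, 0 ≤ a i) (hb : ∀ i, 0 ≤ b i) :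
    ConcaveOn ℝ (Ici 0) (fun t => ⨅ i, a i + b i * t) := by
  refine ⟨convex_Ici 0, fun x hx y hy p q hp hq hpq => le_ciInf fun i => ?_⟩
  have hix := ciInf_le (bddBelow_range_affine a b ha hb hx) i
  have hiy := ciInf_le (bddBelow_range_affine a b ha hb hy) i
  calc p • (⨅ i, a i + b i * x) + q • (⨅ i, a i + b i * y)
      ≤ p * (a i + b i * x) + q * (a i + b i * y) := by
        simp only [smul_eq_mul]; gcongr
    _ = a i + b i * (p • x + q • y) := by
        simp only [smul_eq_mul]; linear_combination a i * hpq

end InfAffine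

noncomputable def alphaZeroMajorant (ω : ℝ → ℝ) (C t₀ t : ℝ) : ℝ :=
  ⨅ s : Ici t₀, C * ω s + C * ω s / s * t

section AlphaZeroMajorant

variable {ω : ℝ → ℝ} {C t₀ : ℝ}

theorem alphaZeroMajorant_coeff_nonneg (hnonneg : ∀ t ≥ (0:ℝ), 0 ≤ ω t) (hC : 0 ≤ C)
    (ht₀ : 0 < t₀) (s : Ici t₀) : 0 ≤ C * ω s ∧ 0 ≤ C * ω s / s :=
  have h := mul_nonneg hC (hnonneg s (ht₀.le.trans s.2))
  ⟨h, div_nonneg h (ht₀.le.trans s.2)⟩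

theorem concaveOn_alphaZeroMajorant (hnonneg : ∀ t ≥ (0:ℝ), 0 ≤ ω t) (hC : 0 ≤ C)
    (ht₀ : 0 < t₀) : ConcaveOn ℝ (Ici 0) (alphaZeroMajorant ω C t₀) :=
  have : Nonempty (Ici t₀) := nonempty_Ici.to_subtype
  concaveOn_iInf_affine _ _ (fun s => (alphaZeroMajorant_coeff_nonneg hnonneg hC ht₀ s).1)
    fun s => (alphaZeroMajorant_coeff_nonneg hnonneg hC ht₀ s).2

theorem monotoneOn_alphaZeroMajorant (hnonneg : ∀ t ≥ (0:ℝ), 0 ≤ ω t) (hC : 0 ≤ C)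
    (ht₀ : 0 < t₀) : MonotoneOn (alphaZeroMajorant ω C t₀) (Ici 0) :=
  monotoneOn_iInf_affine _ _ (fun s => (alphaZeroMajorant_coeff_nonneg hnonneg hC ht₀ s).1)
    fun s => (alphaZeroMajorant_coeff_nonneg hnonneg hC ht₀ s).2

theorem alphaZeroMajorant_le (hnonneg : ∀ t ≥ (0:ℝ), 0 ≤ ω t) (hC : 0 ≤ C) (ht₀ : 0 < t₀)
    {t : ℝ} (ht : 0 ≤ t) : alphaZeroMajorant ω C t₀ t ≤ 2 * C * ω t + 2 * C * ω t₀ := by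
  have hbdd := bddBelow_range_affine _ _
    (fun s => (alphaZeroMajorant_coeff_nonneg hnonneg hC ht₀ s).1)
    (fun s => (alphaZeroMajorant_coeff_nonneg hnonneg hC ht₀ s).2) ht
  have hωt₀ := mul_nonneg hC (hnonneg t₀ ht₀.le)
  have hωt := mul_nonneg hC (hnonneg t ht)
  rcases le_or_gt t₀ t with h | h
  · have hs := ciInf_le hbdd ⟨t, h⟩
    rw [div_mul_cancel₀ _ (ht₀.trans_le h).ne'] at hs
    unfold alphaZeroMajorant; linarith
  · have hs := ciInf_le hbdd ⟨t₀, self_mem_Ici⟩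
    have : C * ω t₀ / t₀ * t ≤ C * ω t₀ := by
      rw [div_mul_eq_mul_div, div_le_iff₀ ht₀]; exact mul_le_mul_of_nonneg_left h.le hωt₀
    unfold alphaZeroMajorant; dsimp only at hs; linarith

theorem le_alphaZeroMajorant (hmono : MonotoneOn ω (Ici 0)) (hnonneg : ∀ t ≥ (0:ℝ), 0 ≤ ω t)
    (hC : 1 ≤ C) (ht₀ : 0 < t₀)
    (halpha0 : ∀ lam ≥ (1:ℝ), ∀ t ≥ t₀, ω (lam * t) ≤ lam * C * ω t) {t : ℝ} (ht : 0 ≤ t) :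
    ω t ≤ alphaZeroMajorant ω C t₀ t := by
  have : Nonempty (Ici t₀) := nonempty_Ici.to_subtype
  refine le_ciInf fun s => ?_
  obtain ⟨hs₀, hs₁⟩ := alphaZeroMajorant_coeff_nonneg hnonneg (zero_le_one.trans hC) ht₀ s
  have hs : 0 < (s : ℝ) := ht₀.trans_le s.2
  have hts := mul_nonneg hs₁ ht
  rcases le_or_gt t s with h | h
  · have := hmono ht hs.le h
    nlinarith [hnonneg s hs.le]
  · have h' := halpha0 (t / s) ((one_le_div hs).mpr h.le) s s.2
    rw [div_mul_cancel₀ _ hs.ne'] at h'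
    calc ω t ≤ t / s * C * ω s := h'
      _ = C * ω s / s * t := by ring
      _ ≤ _ := by linarith

end AlphaZeroMajorant

theorem alpha0_implies_equiv_subadditive_general
    (ω : ℝ → ℝ)
    (hmono : MonotoneOn ω (Set.Ici 0))
    (hnonneg : ∀ t ≥ (0:ℝ), 0 ≤ ω t)
    (C t₀ : ℝ) (ht₀ : 0 < t₀)
    (halpha0 : ∀ lam ≥ (1:ℝ), ∀ t ≥ t₀, ω (lam * t) ≤ lam * C * ω t) :
    ∃ κ : ℝ → ℝ, ConcaveOn ℝ (Set.Ici 0) κ ∧ MonotoneOn κ (Set.Ici 0) ∧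
      (∀ t ≥ (0:ℝ), 0 ≤ κ t) ∧
      ∃ A > (0:ℝ), ∃ B > (0:ℝ),
        (∀ t ≥ (0:ℝ), κ t ≤ A * ω t + A) ∧ (∀ t ≥ (0:ℝ), ω t ≤ B * κ t + B) := by
  set C' := max C 1
  have hC' : 1 ≤ C' := le_max_right C 1
  have hC'₀ : 0 ≤ C' := zero_le_one.trans hC'
  have halpha0' : ∀ lam ≥ (1:ℝ), ∀ t ≥ t₀, ω (lam * t) ≤ lam * C' * ω t :=
    fun lam hlam t ht => (halpha0 lam hlam t ht).trans <| by
      have := hnonneg t (ht₀.le.trans ht)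
      gcongr
      exact le_max_left C 1
  have hle t (ht : 0 ≤ t) := le_alphaZeroMajorant hmono hnonneg hC' ht₀ halpha0' ht
  have hωt₀ := hnonneg t₀ ht₀.le
  refine ⟨alphaZeroMajorant ω C' t₀, concaveOn_alphaZeroMajorant hnonneg hC'₀ ht₀,
    monotoneOn_alphaZeroMajorant hnonneg hC'₀ ht₀, fun t ht => (hnonneg t ht).trans (hle t ht),
    2 * C' * (1 + ω t₀), by positivity, 1, one_pos, fun t ht => ?_,
    fun t ht => by linarith [hle t ht]⟩
  have := alphaZeroMajorant_le hnonneg hC'₀ ht₀ ht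
  nlinarith [mul_nonneg (mul_nonneg hC'₀ hωt₀) (hnonneg t ht)]

/-- If a weight function ω satisfies (α₀), then ω is equivalent to a concave
(subadditive) increasing weight: there are a concave increasing κ and A, B > 0
with κ(t) ≤ A ω(t) + A and ω(t) ≤ B κ(t) + B for all t ≥ 0. -/
theorem alpha0_implies_equiv_subadditive
    (ω : ℝ → ℝ)
    (hcont : ContinuousOn ω (Set.Ici 0))
    (hmono : MonotoneOn ω (Set.Ici 0))
    (hnonneg : ∀ t ≥ (0:ℝ), 0 ≤ ω t)
    (L : ℝ) (hL : 0 < L) (halpha : ∀ t ≥ (0:ℝ), ω (2 * t) ≤ L * (ω t + 1))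
    (hlog : Real.log =o[atTop] ω)
    (hconv : ConvexOn ℝ Set.univ (fun t => ω (Real.exp t)))
    (C t₀ : ℝ) (hC : 0 < C) (ht₀ : 0 < t₀)
    (halpha0 : ∀ lam ≥ (1:ℝ), ∀ t ≥ t₀, ω (lam * t) ≤ lam * C * ω t) :
    ∃ κ : ℝ → ℝ, ConcaveOn ℝ (Set.Ici 0) κ ∧ MonotoneOn κ (Set.Ici 0) ∧
      (∀ t ≥ (0:ℝ), 0 ≤ κ t) ∧
      ∃ A > (0:ℝ), ∃ B > (0:ℝ),
        (∀ t ≥ (0:ℝ), κ t ≤ A * ω t + A) ∧ (∀ t ≥ (0:ℝ), ω t ≤ B * κ t + B) :=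
  alpha0_implies_equiv_subadditive_general ω hmono hnonneg C t₀ ht₀ halpha0
end
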